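/- Key intermediate estimate: under the assumptions of the Stein-type estimate (N[x]=N[−x]=0, μ attains N[φ]), one has |(1/2)φ''(0)∫x²dμ − G(φ''(0))| ≤ [φ'']_α · N[|x|^{2+α}]. -/

import Mathlib

open MeasureTheory

/-- The supremum sublinear expectation `N[φ] = sup_{μ∈Θ} ∫ φ dμ`. -/
noncomputable def slExp (Θ : Set (Measure ℝ)) (φ : ℝ → ℝ) : ℝ :=
  sSup ((fun μ => ∫ x, φ x ∂μ) '' Θ)

/-!
Every `ν ∈ Θ` is centred, because `±∫ x dν ≤ N[±x] = 0`. Integrating the second-order Taylor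
bound `|φ x - φ 0 - φ'(0) x - φ''(0) x² / 2| ≤ [φ'']_α |x|^(2+α) / 2` (Lagrange remainder plus
Hölder continuity of `φ''`) against `ν` therefore shows that `2 (∫ φ dν - φ 0)` and
`∫ φ''(0) x² dν` differ by at most `[φ'']_α N[|x|^(2+α)]`. Since `μ` maximises the first of these
over `Θ`, it maximises the second up to twice that error, which bounds `N[φ''(0) x²]`.
-/

open Set Filter Topology

lemma continuous_of_abs_sub_le_mul_rpow {f : ℝ → ℝ} {K α : ℝ} (hα : 0 < α)
    (hf : ∀ x y, |f x - f y| ≤ K * |x - y| ^ α) : Continuous f := by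
  refine continuous_iff_continuousAt.2 fun x₀ => tendsto_iff_dist_tendsto_zero.2 ?_
  have hlim : Tendsto (fun x => K * |x - x₀| ^ α) (𝓝 x₀) (𝓝 (K * |x₀ - x₀| ^ α)) :=
    ((continuous_abs.comp (continuous_sub_right x₀)).rpow_const
      fun _ => Or.inr hα.le).const_mul K |>.tendsto x₀
  rw [sub_self, abs_zero, Real.zero_rpow hα.ne', mul_zero] at hlim
  exact squeeze_zero (fun _ => dist_nonneg) (fun x => hf x x₀) hlim

lemma contDiff_two_of_continuous_deriv_deriv {f : ℝ → ℝ} (hf : Differentiable ℝ f)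
    (hf' : Differentiable ℝ (deriv f)) (hf'' : Continuous (deriv (deriv f))) :
    ContDiff ℝ 2 f :=
  contDiff_succ_iff_deriv.2 ⟨hf, by simp, contDiff_one_iff_deriv.2 ⟨hf', hf''⟩⟩

lemma exists_sub_taylor_one_eq {f : ℝ → ℝ} (hf : ContDiff ℝ 2 f) {x : ℝ} (hx : 0 ≠ x) :
    ∃ ξ ∈ uIoo 0 x, f x - f 0 - deriv f 0 * x = deriv (deriv f) ξ * x ^ 2 / 2 := by
  obtain ⟨ξ, hξ, h⟩ := taylor_mean_remainder_lagrange_iteratedDeriv (n := 1) hx hf.contDiffOn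
  refine ⟨ξ, hξ, ?_⟩
  rw [taylorWithinEval_succ, taylor_within_zero_eval, iteratedDerivWithin_one,
    ((hf.differentiable two_ne_zero) 0).derivWithin (uniqueDiffOn_uIcc hx 0 left_mem_uIcc)] at h
  simp only [iteratedDeriv_succ, iteratedDeriv_zero] at h
  linear_combination h

lemma abs_sub_taylor_two_le {f : ℝ → ℝ} {K α : ℝ} (hK : 0 ≤ K) (hα : 0 ≤ α)
    (hf : ContDiff ℝ 2 f)
    (hH : ∀ x y, |deriv (deriv f) x - deriv (deriv f) y| ≤ K * |x - y| ^ α) (x : ℝ) :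
    |f x - f 0 - deriv f 0 * x - 1 / 2 * deriv (deriv f) 0 * x ^ 2| ≤ K / 2 * |x| ^ (2 + α) := by
  rcases eq_or_ne 0 x with rfl | hx
  · simp [Real.zero_rpow (by positivity : 2 + α ≠ 0)]
  obtain ⟨ξ, hξ, h⟩ := exists_sub_taylor_one_eq hf hx
  have hξx : |ξ| ≤ |x| := by
    simpa using abs_sub_left_of_mem_uIcc (uIoo_subset_uIcc_self hξ)
  have hpow : |x| ^ (2 + α) = x ^ 2 * |x| ^ α := by
    rw [Real.rpow_add (abs_pos.2 hx.symm), Real.rpow_two, sq_abs]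
  calc |f x - f 0 - deriv f 0 * x - 1 / 2 * deriv (deriv f) 0 * x ^ 2|
      = |deriv (deriv f) ξ - deriv (deriv f) 0| * (x ^ 2 / 2) := by
        rw [h, ← abs_of_nonneg (by positivity : (0:ℝ) ≤ x ^ 2 / 2), ← abs_mul]
        ring_nf
    _ ≤ K * |ξ| ^ α * (x ^ 2 / 2) := by gcongr; simpa using hH ξ 0
    _ ≤ K * |x| ^ α * (x ^ 2 / 2) := by gcongr
    _ = K / 2 * |x| ^ (2 + α) := by rw [hpow]; ring

lemma rpow_le_one_add_rpow {y q p : ℝ} (hy : 0 ≤ y) (hq : 0 ≤ q) (hqp : q ≤ p) :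
    y ^ q ≤ 1 + y ^ p := by
  rcases le_total y 1 with h | h
  · linarith [Real.rpow_le_one hy h hq, Real.rpow_nonneg hy p]
  · linarith [Real.rpow_le_rpow_of_exponent_le h hqp]

lemma abs_le_one_add_abs_rpow {p : ℝ} (hp : 1 ≤ p) (x : ℝ) : |x| ≤ 1 + |x| ^ p := by
  simpa using rpow_le_one_add_rpow (abs_nonneg x) zero_le_one hp

lemma sq_le_one_add_abs_rpow {p : ℝ} (hp : 2 ≤ p) (x : ℝ) : x ^ 2 ≤ 1 + |x| ^ p := by
  simpa [Real.rpow_two] using rpow_le_one_add_rpow (abs_nonneg x) zero_le_two hp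

section Moments

variable {μ : Measure ℝ} {f : ℝ → ℝ} {p A : ℝ}

lemma integrable_of_abs_le_add_abs_rpow [IsFiniteMeasure μ] (hf : AEStronglyMeasurable f μ)
    (hp : Integrable (fun x => |x| ^ p) μ) (hbound : ∀ x, |f x| ≤ A + |x| ^ p) :
    Integrable f μ :=
  ((integrable_const A).add hp).mono' hf (ae_of_all _ hbound)

lemma integral_le_add_integral_abs_rpow [IsProbabilityMeasure μ] (hf : AEStronglyMeasurable f μ)
    (hp : Integrable (fun x => |x| ^ p) μ) (hbound : ∀ x, |f x| ≤ A + |x| ^ p) :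
    ∫ x, f x ∂μ ≤ A + ∫ x, |x| ^ p ∂μ := by
  calc ∫ x, f x ∂μ ≤ ∫ x, (A + |x| ^ p) ∂μ :=
        integral_mono (integrable_of_abs_le_add_abs_rpow hf hp hbound)
          ((integrable_const A).add hp) fun x => (le_abs_self _).trans (hbound x)
    _ = A + ∫ x, |x| ^ p ∂μ := by simp [integral_add (integrable_const A) hp]

lemma abs_integral_sub_taylor_two_le [IsProbabilityMeasure μ] {g : ℝ → ℝ} {a b : ℝ}
    (hf : Integrable f μ) (hid : Integrable (fun x => x) μ) (hsq : Integrable (fun x => x ^ 2) μ)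
    (hg : Integrable g μ) (hmean : ∫ x, x ∂μ = 0)
    (hT : ∀ x, |f x - f 0 - a * x - b * x ^ 2| ≤ g x) :
    |∫ x, f x ∂μ - f 0 - b * ∫ x, x ^ 2 ∂μ| ≤ ∫ x, g x ∂μ := by
  have hf₀ : Integrable (fun x => f x - f 0) μ := hf.sub (integrable_const _)
  have hf₁ : Integrable (fun x => f x - f 0 - a * x) μ := hf₀.sub (hid.const_mul a)
  have hlin : ∫ x, (f x - f 0 - a * x - b * x ^ 2) ∂μ = ∫ x, f x ∂μ - f 0 - b * ∫ x, x ^ 2 ∂μ := by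
    rw [integral_sub hf₁ (hsq.const_mul b), integral_sub hf₀ (hid.const_mul a),
      integral_sub hf (integrable_const _), integral_const_mul, integral_const_mul, hmean]
    simp
  rw [← hlin]
  exact (abs_integral_le_integral_abs).trans
    (integral_mono_of_nonneg (ae_of_all _ fun _ => abs_nonneg _) hg (ae_of_all _ hT))

end Moments

lemma abs_sub_csSup_image_le_of_isMaxOn {β : Type*} {s : Set β} {F G : β → ℝ} {a : β} {ε : ℝ}
    (ha : a ∈ s) (hmax : IsMaxOn F s a) (hFG : ∀ b ∈ s, |F b - G b| ≤ ε) :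
    |G a - sSup (G '' s)| ≤ 2 * ε := by
  have hG : ∀ b ∈ s, G b ≤ G a + 2 * ε := fun b hb => by
    linarith [abs_le.1 (hFG b hb), abs_le.1 (hFG a ha), isMaxOn_iff.1 hmax b hb]
  have hle : G a ≤ sSup (G '' s) := le_csSup ⟨_, forall_mem_image.2 hG⟩ (mem_image_of_mem G ha)
  have hge : sSup (G '' s) ≤ G a + 2 * ε :=
    csSup_le ⟨_, mem_image_of_mem G ha⟩ (forall_mem_image.2 hG)
  rw [abs_sub_comm, abs_of_nonneg (by linarith)]
  linarith

section SublinearExpectation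

variable {Θ : Set (Measure ℝ)} {f : ℝ → ℝ}

lemma integral_le_slExp (hf : BddAbove ((fun μ => ∫ x, f x ∂μ) '' Θ)) {μ : Measure ℝ}
    (hμ : μ ∈ Θ) : ∫ x, f x ∂μ ≤ slExp Θ f :=
  le_csSup hf (mem_image_of_mem _ hμ)

lemma bddAbove_integral_of_abs_le_add_abs_rpow (hprob : ∀ μ ∈ Θ, IsProbabilityMeasure μ)
    {p A : ℝ} (hf : Measurable f) (hint : ∀ μ ∈ Θ, Integrable (fun x => |x| ^ p) μ)
    (hbdd : BddAbove ((fun μ => ∫ x, |x| ^ p ∂μ) '' Θ)) (hbound : ∀ x, |f x| ≤ A + |x| ^ p) :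
    BddAbove ((fun μ => ∫ x, f x ∂μ) '' Θ) := by
  obtain ⟨M, hM⟩ := hbdd
  refine ⟨A + M, forall_mem_image.2 fun μ hμ => ?_⟩
  have := hprob μ hμ
  linarith [integral_le_add_integral_abs_rpow hf.aestronglyMeasurable (hint μ hμ) hbound,
    hM (mem_image_of_mem _ hμ)]

lemma integral_id_eq_zero_of_slExp_eq_zero (hprob : ∀ μ ∈ Θ, IsProbabilityMeasure μ) {p : ℝ}
    (hp : 1 ≤ p) (hint : ∀ μ ∈ Θ, Integrable (fun x => |x| ^ p) μ)
    (hbdd : BddAbove ((fun μ => ∫ x, |x| ^ p ∂μ) '' Θ))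
    (hmean : slExp Θ (fun x => x) = 0) (hmean' : slExp Θ (fun x => -x) = 0)
    {μ : Measure ℝ} (hμ : μ ∈ Θ) : ∫ x, x ∂μ = 0 := by
  have hid := abs_le_one_add_abs_rpow hp
  have hle : ∫ x, x ∂μ ≤ 0 := hmean ▸ integral_le_slExp
    (bddAbove_integral_of_abs_le_add_abs_rpow hprob measurable_id' hint hbdd hid) hμ
  have hge : ∫ x, -x ∂μ ≤ 0 := hmean' ▸ integral_le_slExp
    (bddAbove_integral_of_abs_le_add_abs_rpow hprob measurable_neg hint hbdd
      fun x => (abs_neg x).trans_le (hid x)) hμ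
  rw [integral_neg] at hge
  linarith

lemma abs_integral_sub_taylor_two_le_slExp (hprob : ∀ μ ∈ Θ, IsProbabilityMeasure μ)
    {α K C : ℝ} (hα : 0 ≤ α) (hK : 0 ≤ K)
    (hint : ∀ μ ∈ Θ, Integrable (fun x => |x| ^ (2 + α)) μ)
    (hbdd : BddAbove ((fun μ => ∫ x, |x| ^ (2 + α) ∂μ) '' Θ))
    (hfC : ∀ x, |f x| ≤ C) (hf : ContDiff ℝ 2 f)
    (hH : ∀ x y, |deriv (deriv f) x - deriv (deriv f) y| ≤ K * |x - y| ^ α)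
    {μ : Measure ℝ} (hμ : μ ∈ Θ) (hmean : ∫ x, x ∂μ = 0) :
    |∫ x, f x ∂μ - f 0 - 1 / 2 * deriv (deriv f) 0 * ∫ x, x ^ 2 ∂μ| ≤
      K / 2 * slExp Θ (fun x => |x| ^ (2 + α)) := by
  have := hprob μ hμ
  have hf_le (x : ℝ) : |f x| ≤ C + |x| ^ (2 + α) :=
    (hfC x).trans (le_add_of_nonneg_right (by positivity))
  have hsq_le (x : ℝ) : |x ^ 2| ≤ 1 + |x| ^ (2 + α) := by
    simpa using sq_le_one_add_abs_rpow (by linarith) x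
  calc _ ≤ ∫ x, K / 2 * |x| ^ (2 + α) ∂μ :=
        abs_integral_sub_taylor_two_le
          (integrable_of_abs_le_add_abs_rpow hf.continuous.aestronglyMeasurable (hint μ hμ) hf_le)
          (integrable_of_abs_le_add_abs_rpow aestronglyMeasurable_id (hint μ hμ)
            (abs_le_one_add_abs_rpow (by linarith)))
          (integrable_of_abs_le_add_abs_rpow (by fun_prop) (hint μ hμ) hsq_le)
          ((hint μ hμ).const_mul _) hmean (abs_sub_taylor_two_le hK hα hf hH)
    _ ≤ K / 2 * slExp Θ (fun x => |x| ^ (2 + α)) := by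
        rw [integral_const_mul]
        gcongr
        exact integral_le_slExp hbdd hμ

end SublinearExpectation

theorem stein_intermediate_estimate_general (Θ : Set (Measure ℝ))
    (hprob : ∀ μ ∈ Θ, IsProbabilityMeasure μ)
    (α K : ℝ) (hα : α ∈ Set.Ioo (0:ℝ) 1) (hK : 0 ≤ K)
    (hint : ∀ μ ∈ Θ, Integrable (fun x => |x| ^ (2 + α)) μ)
    (hbdd : BddAbove ((fun μ => ∫ x, |x| ^ (2 + α) ∂μ) '' Θ))
    (hmean : slExp Θ (fun x => x) = 0) (hmean' : slExp Θ (fun x => -x) = 0)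
    (φ : ℝ → ℝ) (hφb : ∃ C, ∀ x, |φ x| ≤ C)
    (hd1 : Differentiable ℝ φ) (hd2 : Differentiable ℝ (deriv φ))
    (hH : ∀ x y : ℝ, |deriv (deriv φ) x - deriv (deriv φ) y| ≤ K * |x - y| ^ α)
    (μ : Measure ℝ) (hμ : μ ∈ Θ) (hopt : ∫ x, φ x ∂μ = slExp Θ φ) :
    |(1/2) * deriv (deriv φ) 0 * (∫ x, x^2 ∂μ) -
        (1/2) * slExp Θ (fun y => deriv (deriv φ) 0 * y^2)| ≤
      K * slExp Θ (fun x => |x| ^ (2 + α)) := by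
  obtain ⟨C, hC⟩ := hφb
  set c := deriv (deriv φ) 0
  set M := slExp Θ (fun x => |x| ^ (2 + α))
  have hφ : ContDiff ℝ 2 φ := contDiff_two_of_continuous_deriv_deriv hd1 hd2
    (continuous_of_abs_sub_le_mul_rpow hα.1 hH)
  have htaylor (ν) (hν : ν ∈ Θ) :
      |∫ x, φ x ∂ν - φ 0 - 1 / 2 * c * ∫ x, x ^ 2 ∂ν| ≤ K / 2 * M :=
    abs_integral_sub_taylor_two_le_slExp hprob hα.1.le hK hint hbdd hC hφ hH hν
      (integral_id_eq_zero_of_slExp_eq_zero hprob (by linarith [hα.1]) hint hbdd hmean hmean' hν)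
  have hmax : IsMaxOn (fun ν => 2 * (∫ x, φ x ∂ν - φ 0)) Θ μ := isMaxOn_iff.2 fun ν hν => by
    have : ∫ x, φ x ∂ν ≤ ∫ x, φ x ∂μ := hopt ▸ integral_le_slExp
      (bddAbove_integral_of_abs_le_add_abs_rpow hprob hφ.continuous.measurable hint hbdd
        fun x => (hC x).trans (le_add_of_nonneg_right (by positivity))) hν
    linarith
  have hnear := abs_sub_csSup_image_le_of_isMaxOn (G := fun ν => ∫ y, c * y ^ 2 ∂ν) (ε := K * M)
    hμ hmax fun ν hν => by
      rw [integral_const_mul]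
      have := abs_le.1 (htaylor ν hν)
      exact abs_le.2 ⟨by linarith, by linarith⟩
  calc _ = 1 / 2 * |∫ y, c * y ^ 2 ∂μ - slExp Θ (fun y => c * y ^ 2)| := by
        rw [integral_const_mul, ← abs_of_pos (by norm_num : (0:ℝ) < 1 / 2), ← abs_mul]
        ring_nf
    _ ≤ 1 / 2 * (2 * (K * M)) := by gcongr; exact hnear
    _ = K * M := by ring

/-- key intermediate estimate
`|(1/2)φ''(0)∫x²dμ − G(φ''(0))| ≤ [φ'']_α N[|x|^{2+α}]` at an optimizing measure `μ`. -/
theorem stein_intermediate_estimate (Θ : Set (Measure ℝ)) (hne : Θ.Nonempty)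
    (hprob : ∀ μ ∈ Θ, IsProbabilityMeasure μ)
    (α K : ℝ) (hα : α ∈ Set.Ioo (0:ℝ) 1) (hK : 0 ≤ K)
    (hint : ∀ μ ∈ Θ, Integrable (fun x => |x| ^ (2 + α)) μ)
    (hbdd : BddAbove ((fun μ => ∫ x, |x| ^ (2 + α) ∂μ) '' Θ))
    (hmean : slExp Θ (fun x => x) = 0) (hmean' : slExp Θ (fun x => -x) = 0)
    (φ : ℝ → ℝ) (hφb : ∃ C, ∀ x, |φ x| ≤ C)
    (hd1 : Differentiable ℝ φ) (hd2 : Differentiable ℝ (deriv φ))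
    (hH : ∀ x y : ℝ, |deriv (deriv φ) x - deriv (deriv φ) y| ≤ K * |x - y| ^ α)
    (μ : Measure ℝ) (hμ : μ ∈ Θ) (hopt : ∫ x, φ x ∂μ = slExp Θ φ) :
    |(1/2) * deriv (deriv φ) 0 * (∫ x, x^2 ∂μ) -
        (1/2) * slExp Θ (fun y => deriv (deriv φ) 0 * y^2)| ≤
      K * slExp Θ (fun x => |x| ^ (2 + α)) :=
  stein_intermediate_estimate_general Θ hprob α K hα hK hint hbdd hmean hmean' φ hφb hd1 hd2 hH μ hμ
    hopt
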